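/- L¹-compactness of minimizing sequences implies strict subadditivity against the profile at infinity: Let (X, d, μ) be a noncompact metric measure space satisfying the cut property, and assume the isoperimetric profile I_X is real-valued and continuous on (0, μ(X)). Let V ∈ (0, μ(X)) and suppose that every sequence of Borel sets Ω_k ⊆ X with lim_k μ(Ω_k) = V and lim_k P(Ω_k) = I_X(V) admits a subsequence Ω_{k_j} and a Borel set Ω ⊆ X with χ_{Ω_{k_j}} → χ_Ω in L¹(X, μ). Then I_X(V) < I_X(V_1) + I^∞_X(V_2) for all V_1, V_2 ≥ 0 with V_1 + V_2 = V and V_2 ∈ (0, V] (here I_X(0) := 0). -/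

import Mathlib

open Filter MeasureTheory Metric Set Topology
open scoped ENNReal NNReal

noncomputable section

variable {X : Type*} [MetricSpace X] [MeasurableSpace X]

/-- `u` is locally Lipschitz on the set `A`. -/
def LocLipschitzOn (u : X → ℝ) (A : Set X) : Prop :=
  ∀ x ∈ A, ∃ K : NNReal, ∃ t ∈ 𝓝[A] x, LipschitzOnWith K u t

/-- The slope `lip u (x)` of `u` at `x` (equal to `0` at isolated points). -/
def lipSlope (u : X → ℝ) (x : X) : ℝ≥0∞ :=
  Filter.limsup (fun y => ENNReal.ofReal (|u y - u x| / dist y x)) (𝓝[≠] x)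

/-- Convergence `u i → f` in `L¹(B, μ)`. -/
def TendstoL1On (μ : Measure X) (B : Set X) (u : ℕ → X → ℝ) (f : X → ℝ) : Prop :=
  Tendsto (fun i => ∫⁻ x in B, ENNReal.ofReal |u i x - f x| ∂μ) atTop (𝓝 0)

/-- Convergence `u i → f` in `L¹_loc(A, μ)`, i.e. in `L¹(K, μ)` for every compact `K ⊆ A`. -/
def TendstoL1LocOn (μ : Measure X) (A : Set X) (u : ℕ → X → ℝ) (f : X → ℝ) : Prop :=
  ∀ K : Set X, K ⊆ A → IsCompact K → TendstoL1On μ K u f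

/-- The relative perimeter `P(E, A)` of a Borel set `E` in an open set `A`. -/
def perim (μ : Measure X) (E A : Set X) : ℝ≥0∞ :=
  ⨅ (u : ℕ → X → ℝ) (_ : ∀ i, LocLipschitzOn (u i) A)
    (_ : TendstoL1LocOn μ A u (E.indicator 1)),
    Filter.liminf (fun i => ∫⁻ x in A, lipSlope (u i) x ∂μ) atTop

/-- The perimeter `P(E) := P(E, X)`. -/
def Perim (μ : Measure X) (E : Set X) : ℝ≥0∞ := perim μ E Set.univ

/-- The isoperimetric profile `I_X`. -/
def isoProfile (μ : Measure X) (V : ℝ) : ℝ≥0∞ :=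
  ⨅ (E : Set X) (_ : MeasurableSet E) (_ : μ E = ENNReal.ofReal V), Perim μ E

/-- The measure is finite on bounded sets. -/
def FiniteOnBounded (μ : Measure X) : Prop :=
  ∀ s : Set X, Bornology.IsBounded s → μ s < ⊤

/-- The support of the measure is the whole space. -/
def FullSupport (μ : Measure X) : Prop :=
  ∀ (x : X) (r : ℝ), 0 < r → 0 < μ (ball x r)

/-- (H1) BV compactness. -/
def BVCompactness (μ : Measure X) : Prop :=
  ∀ E : ℕ → Set X, (∀ i, MeasurableSet (E i)) →
    (∃ M : ℝ≥0∞, M ≠ ⊤ ∧ ∀ i, μ (E i) + Perim μ (E i) ≤ M) →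
    ∃ φ : ℕ → ℕ, StrictMono φ ∧ ∃ F : Set X, MeasurableSet F ∧
      ∀ (x : X) (r : ℝ), 0 < r →
        TendstoL1On μ (ball x r) (fun k => (E (φ k)).indicator 1) (F.indicator 1)

/-- (H2) Cut property. -/
def CutProperty (μ : Measure X) : Prop :=
  ∀ E : Set X, MeasurableSet E → Perim μ E ≠ ⊤ → ∀ o : X,
    ∀ᵐ r ∂(volume.restrict (Set.Ioi (0:ℝ))),
      Perim μ (E ∩ ball o r) ≤ perim μ E (ball o r) +
          ENNReal.ofReal (deriv (fun s => (μ (E ∩ ball o s)).toReal) r) ∧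
      Perim μ (E \ ball o r) ≤ perim μ E (closure (ball o r))ᶜ +
          ENNReal.ofReal (deriv (fun s => (μ (E ∩ ball o s)).toReal) r)

/-- (H3) The perimeter of balls of radius `r` vanishes uniformly as `r → 0⁺`. -/
def SmallBallPerimeter (μ : Measure X) : Prop :=
  Tendsto (fun r : ℝ => ⨆ x : X, Perim μ (ball x r)) (𝓝[>] 0) (𝓝 0)

/-- (H4) Continuity of the volume of balls. -/
def BallVolContinuous (μ : Measure X) : Prop :=
  ∀ x : X, ContinuousOn (fun r : ℝ => (μ (ball x r)).toReal) (Set.Ioi (0:ℝ))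

/-- (H5) `μ` is uniformly locally doubling. -/
def UnifLocDoubling (μ : Measure X) : Prop :=
  ∀ R : ℝ, 0 < R → ∃ C : ℝ≥0∞, C ≠ ⊤ ∧
    ∀ (x : X) (r : ℝ), 0 < r → r ≤ R → μ (ball x (2*r)) ≤ C * μ (ball x r)

/-- The isoperimetric profile at infinity `I^∞_X`. -/
def isoProfileAtInfty (μ : Measure X) (V : ℝ) : ℝ≥0∞ :=
  ⨅ (E : ℕ → Set X) (_ : ∀ i, MeasurableSet (E i))
    (_ : Tendsto (fun i => μ (E i)) atTop (𝓝 (ENNReal.ofReal V)))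
    (_ : ∀ (x : X) (r : ℝ), 0 < r → ∀ᶠ i in atTop, E i ∩ ball x r = ∅),
    Filter.liminf (fun i => Perim μ (E i)) atTop

/-- The isoperimetric profile at infinity volumewise `Ĩ^∞_X`. -/
def isoProfileAtInftyVol (μ : Measure X) (V : ℝ) : ℝ≥0∞ :=
  ⨅ (E : ℕ → Set X) (_ : ∀ i, MeasurableSet (E i))
    (_ : Tendsto (fun i => μ (E i)) atTop (𝓝 (ENNReal.ofReal V)))
    (_ : ∀ (x : X) (r : ℝ), 0 < r →
      Tendsto (fun i => μ (E i ∩ ball x r)) atTop (𝓝 0)),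
    Filter.liminf (fun i => Perim μ (E i)) atTop

/-- The open interval `(0, μ(X))` of admissible volumes. -/
def profileDomain (μ : Measure X) : Set ℝ :=
  {V : ℝ | 0 < V ∧ ENNReal.ofReal V < μ Set.univ}

/-!
Suppose `I(V) ≥ I(V₁) + I^∞(V₂)`. By the cut property an almost-minimizer of volume `V₁` can be
cut along a sphere of large radius at small cost in perimeter and volume, so it may be taken
bounded; adding a set of volume about `V₂` and perimeter about `I^∞(V₂)` taken from a sequence
escaping to infinity produces sets whose volumes tend to `V` and whose perimeters are eventually
at most `I(V₁) + I^∞(V₂) + o(1) ≤ I(V) + o(1)`. Continuity of the profile makes this a minimizing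
sequence, so a subsequence converges in `L¹` to a set of finite measure. Such a limit cannot
capture the part escaping to infinity, which has volume close to `V₂ > 0`: contradiction.
-/

theorem ENNReal.limsup_add_le_add_limsup {ι : Type*} (f : Filter ι) (u v : ι → ℝ≥0∞) :
    limsup (u + v) f ≤ limsup u f + limsup v f := by
  simp only [limsup_eq, sInf_eq_iInf]
  exact ENNReal.le_iInf₂_add_iInf₂ fun a ha b hb =>
    iInf₂_le (a + b) ((ha.and hb).mono fun _ h => add_le_add h.1 h.2)

theorem ENNReal.tendsto_of_le_add_of_le_add {ι : Type*} {l : Filter ι} {f e : ι → ℝ≥0∞}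
    {a : ℝ≥0∞} (ha : a ≠ ⊤) (he : Tendsto e l (𝓝 0)) (hle : ∀ i, f i ≤ a + e i)
    (hge : ∀ i, a ≤ f i + e i) : Tendsto f l (𝓝 a) := by
  refine (ENNReal.tendsto_nhds ha).2 fun δ hδ => ?_
  filter_upwards [he.eventually_lt_const hδ] with i hi
  exact ⟨tsub_le_iff_right.2 ((hge i).trans (by gcongr)), (hle i).trans (by gcongr)⟩

theorem iSup_inter_dense_eq {Y α : Type*} [TopologicalSpace Y] [CompleteLinearOrder α]
    [TopologicalSpace α] [ClosedIicTopology α] {U D : Set Y} {g : Y → α} (hU : IsOpen U)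
    (hD : Dense D) (hg : ContinuousOn g U) : ⨆ y ∈ U ∩ D, g y = ⨆ y ∈ U, g y := by
  refine le_antisymm (biSup_mono fun _ => And.left) (iSup₂_le fun y hy => ?_)
  have hcl : g y ∈ closure (g '' (U ∩ D)) :=
    ((hg y hy).mono inter_subset_left).mem_closure_image (hD.open_subset_closure_inter hU hy)
  exact isClosed_Iic.closure_subset_iff.2 (image_subset_iff.2 fun d hd => le_biSup g hd) hcl

theorem Monotone.lintegral_ofReal_deriv_le {m : ℝ → ℝ} (hm : Monotone m) {a b : ℝ}
    (hab : a ≤ b) : ∫⁻ r in Ioc a b, ENNReal.ofReal (deriv m r) ≤ ENNReal.ofReal (m b - m a) := by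
  have hint : IntegrableOn (deriv m) (Ioc a b) := (hm.monotoneOn _).intervalIntegrable_deriv.1
  rw [← ofReal_integral_eq_lintegral_ofReal hint (.of_forall fun _ => hm.deriv_nonneg),
    ← intervalIntegral.integral_of_le hab]
  have hmem := (hm.monotoneOn (uIcc a b)).intervalIntegral_deriv_mem_uIcc
  rw [uIcc_of_le (sub_nonneg.2 (hm hab))] at hmem
  exact ENNReal.ofReal_le_ofReal hmem.2

theorem Monotone.frequently_deriv_lt {m : ℝ → ℝ} (hm : Monotone m) {a b ε : ℝ} (hab : a ≤ b)
    (h : m b - m a < ε * (b - a)) : ∃ᶠ r in ae (volume.restrict (Ioc a b)), deriv m r < ε := by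
  intro hge
  have hε : 0 ≤ ε := by
    by_contra! hneg
    nlinarith [hm hab, mul_nonneg (neg_nonneg.2 hneg.le) (sub_nonneg.2 hab)]
  have hle : ENNReal.ofReal (ε * (b - a)) ≤ ENNReal.ofReal (m b - m a) :=
    calc ENNReal.ofReal (ε * (b - a)) = ∫⁻ _ in Ioc a b, ENNReal.ofReal ε := by
          rw [setLIntegral_const, Real.volume_Ioc, ENNReal.ofReal_mul hε]
      _ ≤ ∫⁻ r in Ioc a b, ENNReal.ofReal (deriv m r) :=
          lintegral_mono_ae (hge.mono fun _ hr => ENNReal.ofReal_le_ofReal (not_lt.1 hr))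
      _ ≤ ENNReal.ofReal (m b - m a) := hm.lintegral_ofReal_deriv_le hab
  rw [ENNReal.ofReal_le_ofReal_iff (sub_nonneg.2 (hm hab))] at hle
  linarith

lemma TendstoL1On.add {Z : Type*} [MeasurableSpace Z] {μ : Measure Z} {B : Set Z}
    {u v : ℕ → Z → ℝ} {f g : Z → ℝ} (hu : TendstoL1On μ B u f) (hv : TendstoL1On μ B v g)
    (hmeas : ∀ i, Measurable fun x => u i x - f x) :
    TendstoL1On μ B (fun i x => u i x + v i x) (fun x => f x + g x) := by
  unfold TendstoL1On at *
  refine tendsto_of_tendsto_of_tendsto_of_le_of_le tendsto_const_nhds (by simpa using hu.add hv)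
    (fun _ => zero_le) fun i => ?_
  rw [← lintegral_add_left (hmeas i).abs.ennreal_ofReal]
  refine lintegral_mono fun x => ?_
  rw [← ENNReal.ofReal_add (abs_nonneg _) (abs_nonneg _), add_sub_add_comm]
  exact ENNReal.ofReal_le_ofReal (abs_add_le _ _)

lemma measure_diff_le_lintegral_indicator_sub {Z : Type*} [MeasurableSpace Z] {μ : Measure Z}
    {A B : Set Z} (hAB : MeasurableSet (A \ B)) :
    μ (A \ B) ≤ ∫⁻ x in univ, ENNReal.ofReal |A.indicator 1 x - B.indicator 1 x| ∂μ := by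
  rw [Measure.restrict_univ, ← lintegral_indicator_one hAB]
  refine lintegral_mono fun x => ?_
  by_cases hx : x ∈ A \ B
  · simp [hx.1, hx.2, hx]
  · simp [hx]

lemma isOpen_profileDomain {Z : Type*} [MeasurableSpace Z] (μ : Measure Z) :
    IsOpen (profileDomain μ) :=
  (isOpen_lt continuous_const continuous_id).inter
    (isOpen_lt ENNReal.continuous_ofReal continuous_const)

section Slope

variable {Y : Type*} [MetricSpace Y]

lemma lipSlope_add_le (u v : Y → ℝ) (x : Y) :
    lipSlope (fun y => u y + v y) x ≤ lipSlope u x + lipSlope v x := by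
  refine (limsup_le_limsup ?_).trans (ENNReal.limsup_add_le_add_limsup _ _ _)
  filter_upwards with y
  rw [Pi.add_apply, ← ENNReal.ofReal_add (by positivity) (by positivity), ← add_div,
    add_sub_add_comm]
  gcongr
  exact abs_add_le _ _

lemma lipSlope_eq_iInf_iSup (u : Y → ℝ) (x : Y) :
    lipSlope u x = ⨅ n : ℕ, ⨆ y ∈ ball x (1 / ((n : ℝ) + 1)) ∩ {x}ᶜ,
      ENNReal.ofReal (|u y - u x| / dist y x) := by
  rw [lipSlope, (nhdsWithin_hasBasis nhds_basis_ball_inv_nat_succ {x}ᶜ).limsup_eq_iInf_iSup]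
  simp only [iInf_true]

lemma measurable_lipSlope [MeasurableSpace Y] [OpensMeasurableSpace Y]
    [TopologicalSpace.SeparableSpace Y] {u : Y → ℝ} (hu : Continuous u) :
    Measurable (lipSlope u) := by
  obtain ⟨D, hDcount, hD⟩ := TopologicalSpace.exists_countable_dense Y
  have : Countable D := hDcount.to_subtype
  -- the supremum over a punctured ball may be taken over the countable dense set `D`
  have hsup : ∀ (r : ℝ) (x : Y), ⨆ y ∈ ball x r ∩ {x}ᶜ, ENNReal.ofReal (|u y - u x| / dist y x) =
      ⨆ d : D, ⨆ _ : (d : Y) ∈ ball x r ∩ {x}ᶜ, ENNReal.ofReal (|u d - u x| / dist (d : Y) x) := by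
    intro r x
    have hcont : ContinuousOn (fun y => ENNReal.ofReal (|u y - u x| / dist y x)) {x}ᶜ :=
      ENNReal.continuous_ofReal.comp_continuousOn <|
        ((hu.sub continuous_const).abs.continuousOn).div
          (continuous_id.dist continuous_const).continuousOn fun y hy => dist_ne_zero.2 hy
    rw [← iSup_inter_dense_eq (isOpen_ball.inter isOpen_compl_singleton) hD
      (hcont.mono inter_subset_right)]
    simp only [iSup_subtype, mem_inter_iff, iSup_and]
    exact iSup_congr fun _ => (iSup_congr fun _ => iSup_comm).trans iSup_comm
  rw [show lipSlope u = _ from funext (lipSlope_eq_iInf_iSup u)]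
  refine Measurable.iInf fun n => ?_
  rw [funext (hsup _)]
  refine Measurable.iSup fun d => ?_
  classical
  simp only [iSup_eq_if]
  refine Measurable.ite ?_ ?_ measurable_const
  · have : {x : Y | (d : Y) ∈ ball x (1 / ((n : ℝ) + 1)) ∩ {x}ᶜ} =
        ball (d : Y) (1 / ((n : ℝ) + 1)) ∩ {(d : Y)}ᶜ := by
      ext x; simp [dist_comm, eq_comm]
    exact this ▸ (isOpen_ball.inter isOpen_compl_singleton).measurableSet
  · fun_prop

lemma LocLipschitzOn.continuousOn {u : Y → ℝ} {A : Set Y} (hu : LocLipschitzOn u A) :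
    ContinuousOn u A := fun x hx => by
  obtain ⟨K, t, ht, hut⟩ := hu x hx
  exact (hut.continuousOn x (mem_of_mem_nhdsWithin hx ht)).mono_of_mem_nhdsWithin ht

lemma LocLipschitzOn.add {u v : Y → ℝ} {A : Set Y} (hu : LocLipschitzOn u A)
    (hv : LocLipschitzOn v A) : LocLipschitzOn (fun x => u x + v x) A := fun x hx => by
  obtain ⟨K, t, ht, hut⟩ := hu x hx
  obtain ⟨K', t', ht', hvt'⟩ := hv x hx
  exact ⟨K + K', t ∩ t', inter_mem ht ht',
    (hut.mono inter_subset_left).add (hvt'.mono inter_subset_right)⟩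

end Slope

section Perimeter

variable {μ : Measure X}

lemma TendstoL1LocOn.add {A : Set X} {u v : ℕ → X → ℝ} {f g : X → ℝ}
    (hu : TendstoL1LocOn μ A u f) (hv : TendstoL1LocOn μ A v g)
    (hmeas : ∀ i, Measurable fun x => u i x - f x) :
    TendstoL1LocOn μ A (fun i x => u i x + v i x) (fun x => f x + g x) :=
  fun K hK hKc => (hu K hK hKc).add (hv K hK hKc) hmeas

lemma perim_le_liminf {E A : Set X} {u : ℕ → X → ℝ} (hu : ∀ i, LocLipschitzOn (u i) A)
    (hL : TendstoL1LocOn μ A u (E.indicator 1)) :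
    perim μ E A ≤ liminf (fun i => ∫⁻ x in A, lipSlope (u i) x ∂μ) atTop :=
  iInf₂_le_of_le u hu (iInf_le _ hL)

lemma perim_le_Perim (E A : Set X) : perim μ E A ≤ Perim μ E := by
  refine le_iInf₂ fun u hu => le_iInf fun hL => ?_
  refine (perim_le_liminf (fun i x _ => ?_) fun K _ hK => hL K (subset_univ K) hK).trans <|
    liminf_le_liminf (.of_forall fun i => lintegral_mono_set (subset_univ A) |>.trans_eq ?_)
  · obtain ⟨K, t, ht, hut⟩ := hu i x (mem_univ x)
    exact ⟨K, t, mem_nhdsWithin_of_mem_nhds (nhdsWithin_univ x ▸ ht), hut⟩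
  · rw [Measure.restrict_univ]

lemma Perim_union_le [OpensMeasurableSpace X] [TopologicalSpace.SeparableSpace X]
    {G F : Set X} (hG : MeasurableSet G) (hGF : Disjoint G F) :
    Perim μ (G ∪ F) ≤ Perim μ G + Perim μ F := by
  refine ENNReal.le_iInf_add_iInf fun u v => ENNReal.le_iInf₂_add_iInf₂ fun hu hLu hv hLv => ?_
  set A := fun i => ∫⁻ x in univ, lipSlope (u i) x ∂μ
  set B := fun i => ∫⁻ x in univ, lipSlope (v i) x ∂μ
  -- `liminf` is not additive, so pass to subsequences along which both liminfs are limits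
  obtain ⟨σ, hσA, hσ⟩ := exists_seq_tendsto_liminf (u := A) (f := atTop)
  obtain ⟨τ, hτB, hτ⟩ := exists_seq_tendsto_liminf (u := B) (f := atTop)
  have hucont : ∀ i, Continuous (u i) := fun i => continuousOn_univ.1 (hu i).continuousOn
  have hw : ∀ i, LocLipschitzOn (fun x => u (σ i) x + v (τ i) x) univ :=
    fun i => (hu (σ i)).add (hv (τ i))
  have hwL : TendstoL1LocOn μ univ (fun i x => u (σ i) x + v (τ i) x) ((G ∪ F).indicator 1) := by
    rw [indicator_union_of_disjoint hGF]
    exact TendstoL1LocOn.add (fun K hK hKc => (hLu K hK hKc).comp hσ)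
      (fun K hK hKc => (hLv K hK hKc).comp hτ)
      fun i => (hucont (σ i)).measurable.sub (measurable_const.indicator hG)
  calc Perim μ (G ∪ F)
      ≤ liminf (fun i => ∫⁻ x in univ, lipSlope (fun x => u (σ i) x + v (τ i) x) x ∂μ) atTop :=
        perim_le_liminf hw hwL
    _ ≤ liminf (fun i => A (σ i) + B (τ i)) atTop := by
        refine liminf_le_liminf (.of_forall fun i => ?_)
        rw [← lintegral_add_left (measurable_lipSlope (hucont (σ i)))]
        exact lintegral_mono fun x => lipSlope_add_le _ _ x
    _ = liminf A atTop + liminf B atTop := (hσA.add hτB).liminf_eq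

lemma exists_Perim_inter_ball_le (hcut : CutProperty μ) {E : Set X}
    (hE : MeasurableSet E) (hEfin : μ E ≠ ⊤) (hP : Perim μ E ≠ ⊤) (o : X) {ε R : ℝ}
    (hε : 0 < ε) (hR : 0 ≤ R) :
    ∃ r > R, Perim μ (E ∩ ball o r) ≤ Perim μ E + ENNReal.ofReal ε := by
  set m : ℝ → ℝ := fun s => (μ (E ∩ ball o s)).toReal
  set C := (μ E).toReal
  have hm : Monotone m := fun s t hst =>
    ENNReal.toReal_mono (measure_ne_top_of_subset inter_subset_left hEfin)
      (measure_mono (inter_subset_inter_right _ (ball_subset_ball hst)))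
  have hmC : ∀ s, m s ≤ C := fun s => ENNReal.toReal_mono hEfin (measure_mono inter_subset_left)
  set S := R + (C + 1) / ε
  have hRS : R ≤ S := le_add_of_nonneg_right (by positivity)
  -- `m` increases by at most `C` on `(R, S]`, which is too little for `m' ≥ ε` there
  have hslow : m S - m R < ε * (S - R) := by
    have : ε * (S - R) = C + 1 := by
      rw [show S - R = (C + 1) / ε by ring]
      field_simp
    linarith [hmC S, (ENNReal.toReal_nonneg : 0 ≤ m R)]
  have hcutRS := (ae_restrict_mem (measurableSet_Ioc (a := R) (b := S))).and <|
    ae_restrict_of_ae_restrict_of_subset (fun r hr => hR.trans_lt hr.1) (hcut E hE hP o)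
  obtain ⟨r, hr_lt, hrmem, hrcut⟩ :=
    ((hm.frequently_deriv_lt hRS hslow).and_eventually hcutRS).exists
  exact ⟨r, hrmem.1,
    hrcut.1.trans (add_le_add (perim_le_Perim _ _) (ENNReal.ofReal_le_ofReal hr_lt.le))⟩

lemma tendsto_measure_diff_ball_atTop [OpensMeasurableSpace X] {A : Set X}
    (hA : MeasurableSet A) (hfin : μ A ≠ ⊤) (o : X) :
    Tendsto (fun r : ℝ => μ (A \ ball o r)) atTop (𝓝 0) := by
  have hempty : ⋂ r : ℝ, A \ ball o r = ∅ :=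
    eq_empty_of_forall_notMem fun x hx => (mem_iInter.1 hx (dist x o + 1)).2
      (mem_ball.2 (lt_add_one _))
  have h := tendsto_measure_iInter_atTop (μ := μ) (s := fun r : ℝ => A \ ball o r)
    (fun r => (hA.diff measurableSet_ball).nullMeasurableSet)
    (fun r s hrs => sdiff_subset_sdiff_right (ball_subset_ball hrs))
    ⟨0, measure_ne_top_of_subset sdiff_subset hfin⟩
  rwa [hempty, measure_empty] at h

lemma isoProfile_le_Perim {v : ℝ} {E : Set X} (hE : MeasurableSet E)
    (hμE : μ E = ENNReal.ofReal v) : isoProfile μ v ≤ Perim μ E :=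
  iInf₂_le_of_le E hE (iInf_le _ hμE)

lemma tendsto_isoProfile {V : ℝ} (hIfin : ∀ v ∈ profileDomain μ, isoProfile μ v ≠ ⊤)
    (hIcont : ContinuousOn (fun v : ℝ => (isoProfile μ v).toReal) (profileDomain μ))
    (hV : V ∈ profileDomain μ) {ι : Type*} {l : Filter ι} {v : ι → ℝ}
    (hv : Tendsto v l (𝓝 V)) : Tendsto (fun i => isoProfile μ (v i)) l (𝓝 (isoProfile μ V)) := by
  have hnhds := (isOpen_profileDomain μ).mem_nhds hV
  have h := (ENNReal.continuous_ofReal.tendsto _).comp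
    ((hIcont.continuousAt hnhds).tendsto.comp hv)
  rw [ENNReal.ofReal_toReal (hIfin V hV)] at h
  exact h.congr' ((hv.eventually_mem hnhds).mono fun i hi => ENNReal.ofReal_toReal (hIfin _ hi))

lemma tendsto_Perim_of_limsup_le_isoProfile {V : ℝ}
    (hIfin : ∀ v ∈ profileDomain μ, isoProfile μ v ≠ ⊤)
    (hIcont : ContinuousOn (fun v : ℝ => (isoProfile μ v).toReal) (profileDomain μ))
    (hV : V ∈ profileDomain μ) {Ω : ℕ → Set X} (hΩ : ∀ k, MeasurableSet (Ω k))
    (hμ : Tendsto (fun k => μ (Ω k)) atTop (𝓝 (ENNReal.ofReal V)))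
    (hP : limsup (fun k => Perim μ (Ω k)) atTop ≤ isoProfile μ V) :
    Tendsto (fun k => Perim μ (Ω k)) atTop (𝓝 (isoProfile μ V)) := by
  have hfin : ∀ᶠ k in atTop, μ (Ω k) ≠ ⊤ :=
    (hμ.eventually_lt_const ENNReal.ofReal_lt_top).mono fun _ h => h.ne
  have hv : Tendsto (fun k => (μ (Ω k)).toReal) atTop (𝓝 V) := by
    simpa [Function.comp_def, ENNReal.toReal_ofReal hV.1.le] using
      (ENNReal.tendsto_toReal ENNReal.ofReal_ne_top).comp hμ
  refine tendsto_of_le_liminf_of_limsup_le ?_ hP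
  calc isoProfile μ V = liminf (fun k => isoProfile μ (μ (Ω k)).toReal) atTop :=
        (tendsto_isoProfile hIfin hIcont hV hv).liminf_eq.symm
    _ ≤ liminf (fun k => Perim μ (Ω k)) atTop := liminf_le_liminf <|
        hfin.mono fun k hk => isoProfile_le_Perim (hΩ k) (ENNReal.ofReal_toReal hk).symm

lemma exists_Perim_lt_isoProfile_add {v : ℝ} (hI : isoProfile μ v ≠ ⊤) {ε : ℝ≥0∞}
    (hε : ε ≠ 0) :
    ∃ E, MeasurableSet E ∧ μ E = ENNReal.ofReal v ∧ Perim μ E < isoProfile μ v + ε := by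
  obtain ⟨E, hlt⟩ := iInf_lt_iff.1 (ENNReal.lt_add_right hI hε)
  obtain ⟨hE, hlt⟩ := iInf_lt_iff.1 hlt
  obtain ⟨hμE, hPE⟩ := iInf_lt_iff.1 hlt
  exact ⟨E, hE, hμE, hPE⟩

lemma exists_bounded_Perim_le_isoProfile_add [OpensMeasurableSpace X] (hcut : CutProperty μ)
    {v : ℝ} (hI : isoProfile μ v ≠ ⊤) (o : X) {ε : ℝ} (hε : 0 < ε) :
    ∃ G r, MeasurableSet G ∧ G ⊆ ball o r ∧ μ G ≤ ENNReal.ofReal v ∧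
      ENNReal.ofReal v ≤ μ G + ENNReal.ofReal ε ∧
      Perim μ G ≤ isoProfile μ v + ENNReal.ofReal ε + ENNReal.ofReal ε := by
  have hε' : 0 < ENNReal.ofReal ε := ENNReal.ofReal_pos.2 hε
  obtain ⟨E, hE, hμE, hPE⟩ := exists_Perim_lt_isoProfile_add hI hε'.ne'
  have hEfin : μ E ≠ ⊤ := hμE ▸ ENNReal.ofReal_ne_top
  obtain ⟨R, hR, hR₀⟩ := (((tendsto_measure_diff_ball_atTop hE hEfin o).eventually_lt_const
    hε').and (eventually_ge_atTop 0)).exists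
  obtain ⟨r, hrR, hPr⟩ := exists_Perim_inter_ball_le hcut hE hEfin hPE.ne_top o hε hR₀
  refine ⟨E ∩ ball o r, r, hE.inter measurableSet_ball, inter_subset_right,
    hμE ▸ measure_mono inter_subset_left, ?_, hPr.trans (by gcongr)⟩
  calc ENNReal.ofReal v = μ E := hμE.symm
    _ ≤ μ (E ∩ ball o r) + μ (E \ ball o r) := measure_le_inter_add_sdiff μ E _
    _ ≤ μ (E ∩ ball o r) + ENNReal.ofReal ε := by
        gcongr
        exact (measure_mono (sdiff_subset_sdiff_right (ball_subset_ball hrR.le))).trans hR.le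

lemma exists_far_Perim_le_isoProfileAtInfty_add {v : ℝ} (hW : isoProfileAtInfty μ v ≠ ⊤)
    (o : X) {ρ ε : ℝ} (hρ : 0 < ρ) (hε : 0 < ε) :
    ∃ F, MeasurableSet F ∧ F ∩ ball o ρ = ∅ ∧ μ F ≤ ENNReal.ofReal v + ENNReal.ofReal ε ∧
      ENNReal.ofReal v ≤ μ F + ENNReal.ofReal ε ∧
      Perim μ F ≤ isoProfileAtInfty μ v + ENNReal.ofReal ε := by
  have hε' : 0 < ENNReal.ofReal ε := ENNReal.ofReal_pos.2 hε
  obtain ⟨F, hlt⟩ := iInf_lt_iff.1 (ENNReal.lt_add_right hW hε'.ne')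
  obtain ⟨hF, hlt⟩ := iInf_lt_iff.1 hlt
  obtain ⟨hvol, hlt⟩ := iInf_lt_iff.1 hlt
  obtain ⟨hesc, hlt⟩ := iInf_lt_iff.1 hlt
  have hvol' := (ENNReal.tendsto_nhds ENNReal.ofReal_ne_top).1 hvol _ hε'
  obtain ⟨i, hPi, hvoli, hfar⟩ :=
    ((frequently_lt_of_liminf_lt (by isBoundedDefault) hlt).and_eventually
      (hvol'.and (hesc o ρ hρ))).exists
  exact ⟨F i, hF i, hfar, hvoli.2, tsub_le_iff_right.1 hvoli.1, hPi.le⟩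

lemma exists_far_competitor [OpensMeasurableSpace X] [TopologicalSpace.SeparableSpace X]
    (hcut : CutProperty μ) {V₁ V₂ : ℝ} (hV₁ : 0 ≤ V₁) (hV₂ : 0 ≤ V₂)
    (hI : isoProfile μ V₁ ≠ ⊤) (hW : isoProfileAtInfty μ V₂ ≠ ⊤) (o : X) {R ε : ℝ}
    (hR : 0 < R) (hε : 0 < ε) :
    ∃ Ω F, MeasurableSet Ω ∧ F ⊆ Ω ∧ F ∩ ball o R = ∅ ∧
      ENNReal.ofReal V₂ ≤ μ F + ENNReal.ofReal ε ∧
      μ Ω ≤ ENNReal.ofReal (V₁ + V₂) + ENNReal.ofReal ε ∧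
      ENNReal.ofReal (V₁ + V₂) ≤ μ Ω + ENNReal.ofReal ε ∧
      Perim μ Ω ≤ isoProfile μ V₁ + isoProfileAtInfty μ V₂ + ENNReal.ofReal ε := by
  set e := ENNReal.ofReal (ε / 3)
  have he : ENNReal.ofReal ε = e + e + e := by
    rw [← ENNReal.ofReal_add (by positivity) (by positivity),
      ← ENNReal.ofReal_add (by positivity) (by positivity)]
    ring_nf
  obtain ⟨G, r, hG, hGr, hG₁, hG₂, hPG⟩ :=
    exists_bounded_Perim_le_isoProfile_add hcut hI o (div_pos hε three_pos)
  obtain ⟨F, hF, hFfar, hF₁, hF₂, hPF⟩ := exists_far_Perim_le_isoProfileAtInfty_add hW o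
    (lt_max_of_lt_right hR : 0 < max r R) (div_pos hε three_pos)
  have hGF : Disjoint G F := by
    rw [disjoint_iff_inter_eq_empty, inter_comm, ← subset_empty_iff, ← hFfar]
    exact inter_subset_inter_right _ (hGr.trans (ball_subset_ball (le_max_left r R)))
  have hμ : μ (G ∪ F) = μ G + μ F := measure_union hGF hF
  rw [ENNReal.ofReal_add hV₁ hV₂, he]
  refine ⟨G ∪ F, F, hG.union hF, subset_union_right, ?_,
    hF₂.trans (by gcongr; exact le_add_self), ?_, ?_, ?_⟩
  · rw [← subset_empty_iff, ← hFfar]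
    exact inter_subset_inter_right _ (ball_subset_ball (le_max_right r R))
  · calc μ (G ∪ F) ≤ ENNReal.ofReal V₁ + (ENNReal.ofReal V₂ + e) := hμ ▸ add_le_add hG₁ hF₁
      _ ≤ _ := by rw [← add_assoc]; gcongr; exact le_add_self
  · calc ENNReal.ofReal V₁ + ENNReal.ofReal V₂ ≤ (μ G + e) + (μ F + e) := add_le_add hG₂ hF₂
      _ ≤ μ (G ∪ F) + (e + e + e) := by
          rw [hμ, add_add_add_comm]
          gcongr
          exact le_self_add
  · calc Perim μ (G ∪ F) ≤ (isoProfile μ V₁ + e + e) + (isoProfileAtInfty μ V₂ + e) :=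
          (Perim_union_le hG hGF).trans (add_le_add hPG hPF)
      _ = _ := by ring

lemma tendsto_measure_zero_of_escaping [OpensMeasurableSpace X] {Ω F : ℕ → Set X} {Ωlim : Set X}
    (hΩ : ∀ k, MeasurableSet (Ω k)) (hΩlim : MeasurableSet Ωlim) (hΩfin : ∀ k, μ (Ω k) ≠ ⊤)
    (hL1 : TendstoL1On μ univ (fun k => (Ω k).indicator 1) (Ωlim.indicator 1))
    (hFΩ : ∀ k, F k ⊆ Ω k) (o : X) {R : ℕ → ℝ} (hR : Tendsto R atTop atTop)
    (hFR : ∀ k, F k ∩ ball o (R k) = ∅) : Tendsto (fun k => μ (F k)) atTop (𝓝 0) := by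
  set T := fun k => ∫⁻ x in univ, ENNReal.ofReal |(Ω k).indicator 1 x - Ωlim.indicator 1 x| ∂μ
  have hT : Tendsto T atTop (𝓝 0) := hL1
  have hlimΩ : ∀ k, μ (Ωlim \ Ω k) ≤ T k := fun k =>
    (measure_diff_le_lintegral_indicator_sub (hΩlim.diff (hΩ k))).trans_eq <|
      lintegral_congr fun x => by rw [abs_sub_comm]
  have hlimfin : μ Ωlim ≠ ⊤ := by
    obtain ⟨k, hk⟩ := (hT.eventually_lt_const zero_lt_one).exists
    refine ne_top_of_le_ne_top (ENNReal.add_ne_top.2 ⟨hΩfin k, (hk.trans ENNReal.one_lt_top).ne⟩)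
      ((measure_le_inter_add_sdiff μ Ωlim (Ω k)).trans ?_)
    exact add_le_add (measure_mono inter_subset_right) (hlimΩ k)
  have htail := (tendsto_measure_diff_ball_atTop hΩlim hlimfin o).comp hR
  refine tendsto_of_tendsto_of_tendsto_of_le_of_le tendsto_const_nhds
    (by simpa using htail.add hT) (fun _ => zero_le) fun k => ?_
  calc μ (F k) ≤ μ (F k ∩ Ωlim) + μ (F k \ Ωlim) := measure_le_inter_add_sdiff μ _ _
    _ ≤ μ (Ωlim \ ball o (R k)) + T k := by
        gcongr
        · exact fun x hx => ⟨hx.2, fun hxR => (hFR k).subset ⟨hx.1, hxR⟩⟩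
        · exact (measure_mono (sdiff_subset_sdiff_left (hFΩ k))).trans
            (measure_diff_le_lintegral_indicator_sub ((hΩ k).diff hΩlim))

end Perimeter

theorem L1_compactness_implies_strict_subadditivity_general
    {X : Type*} [MetricSpace X] [MeasurableSpace X] [BorelSpace X]
    [TopologicalSpace.SeparableSpace X]
    (μ : Measure X)
    (hcut : CutProperty μ)
    (hIfin : ∀ v ∈ profileDomain μ, isoProfile μ v ≠ ⊤)
    (hIcont : ContinuousOn (fun v : ℝ => (isoProfile μ v).toReal) (profileDomain μ))
    (V : ℝ) (hV : V ∈ profileDomain μ)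
    (hcpt : ∀ Ω : ℕ → Set X, (∀ k, MeasurableSet (Ω k)) →
      Tendsto (fun k => μ (Ω k)) atTop (𝓝 (ENNReal.ofReal V)) →
      Tendsto (fun k => Perim μ (Ω k)) atTop (𝓝 (isoProfile μ V)) →
      ∃ φ : ℕ → ℕ, StrictMono φ ∧ ∃ Ωlim : Set X, MeasurableSet Ωlim ∧
        TendstoL1On μ Set.univ (fun k => (Ω (φ k)).indicator 1) (Ωlim.indicator 1)) :
    ∀ V₁ V₂ : ℝ, 0 ≤ V₁ → 0 < V₂ → V₂ ≤ V → V₁ + V₂ = V →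
      isoProfile μ V < isoProfile μ V₁ + isoProfileAtInfty μ V₂ := by
  intro V₁ V₂ hV₁ hV₂ _ hsum
  by_contra! hcon
  have hIV := hIfin V hV
  obtain ⟨o⟩ := nonempty_iff_univ_nonempty.2 (nonempty_of_measure_ne_zero (ne_bot_of_gt hV.2))
  choose Ω F hΩ hFΩ hFfar hF hΩup hΩlow hPΩ using fun k : ℕ =>
    exists_far_competitor hcut hV₁ hV₂.le (ne_top_of_le_ne_top hIV (le_self_add.trans hcon))
      (ne_top_of_le_ne_top hIV (le_add_self.trans hcon)) o (R := k + 1) (ε := 1 / (k + 1))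
      (by positivity) (by positivity)
  have hε : Tendsto (fun k : ℕ => ENNReal.ofReal (1 / (k + 1))) atTop (𝓝 0) := by
    simpa [Function.comp_def] using
      (ENNReal.continuous_ofReal.tendsto 0).comp tendsto_one_div_add_atTop_nhds_zero_nat
  rw [hsum] at hΩup hΩlow
  have hμΩ := ENNReal.tendsto_of_le_add_of_le_add ENNReal.ofReal_ne_top hε hΩup hΩlow
  have hPΩ' : Tendsto (fun k => Perim μ (Ω k)) atTop (𝓝 (isoProfile μ V)) := by
    refine tendsto_Perim_of_limsup_le_isoProfile hIfin hIcont hV hΩ hμΩ <|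
      (limsup_le_limsup (.of_forall hPΩ)).trans (le_of_eq_of_le ?_ hcon)
    simpa using (tendsto_const_nhds.add hε).limsup_eq
  obtain ⟨φ, hφ, Ωlim, hΩlim, hL1⟩ := hcpt Ω hΩ hμΩ hPΩ'
  have hF0 := tendsto_measure_zero_of_escaping (fun k => hΩ (φ k)) hΩlim
    (fun k => ne_top_of_le_ne_top (by finiteness) (hΩup (φ k))) hL1 (fun k => hFΩ (φ k)) o
    (tendsto_atTop_add_const_right _ 1 (tendsto_natCast_atTop_atTop.comp hφ.tendsto_atTop))
    (fun k => hFfar (φ k))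
  have hV₂0 : ENNReal.ofReal V₂ ≤ 0 :=
    ge_of_tendsto' (by simpa using hF0.add (hε.comp hφ.tendsto_atTop)) fun k => hF (φ k)
  exact (ENNReal.ofReal_pos.2 hV₂).not_ge hV₂0

/-- **L¹-compactness of minimizing sequences implies strict subadditivity against the
profile at infinity.** Let `(X, d, μ)` be a noncompact metric measure space satisfying
the cut property, and assume the isoperimetric profile `I_X` is real-valued and
continuous on `(0, μ(X))`. Let `V ∈ (0, μ(X))` and suppose that every sequence of Borel
sets `Ω_k ⊆ X` with `lim_k μ(Ω_k) = V` and `lim_k P(Ω_k) = I_X(V)` admits a subsequence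
`Ω_{k_j}` and a Borel set `Ω ⊆ X` with `χ_{Ω_{k_j}} → χ_Ω` in `L¹(X, μ)`. Then
`I_X(V) < I_X(V₁) + I^∞_X(V₂)` for all `V₁, V₂ ≥ 0` with `V₁ + V₂ = V` and
`V₂ ∈ (0, V]` (note `I_X(0) = 0` for the definition used here). -/
theorem L1_compactness_implies_strict_subadditivity
    {X : Type*} [MetricSpace X] [MeasurableSpace X] [BorelSpace X]
    [LocallyCompactSpace X] [TopologicalSpace.SeparableSpace X] [NoncompactSpace X]
    (μ : Measure X) (hfin : FiniteOnBounded μ) (hsupp : FullSupport μ)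
    (hcut : CutProperty μ)
    (hIfin : ∀ v ∈ profileDomain μ, isoProfile μ v ≠ ⊤)
    (hIcont : ContinuousOn (fun v : ℝ => (isoProfile μ v).toReal) (profileDomain μ))
    (V : ℝ) (hV : V ∈ profileDomain μ)
    (hcpt : ∀ Ω : ℕ → Set X, (∀ k, MeasurableSet (Ω k)) →
      Tendsto (fun k => μ (Ω k)) atTop (𝓝 (ENNReal.ofReal V)) →
      Tendsto (fun k => Perim μ (Ω k)) atTop (𝓝 (isoProfile μ V)) →
      ∃ φ : ℕ → ℕ, StrictMono φ ∧ ∃ Ωlim : Set X, MeasurableSet Ωlim ∧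
        TendstoL1On μ Set.univ (fun k => (Ω (φ k)).indicator 1) (Ωlim.indicator 1)) :
    ∀ V₁ V₂ : ℝ, 0 ≤ V₁ → 0 < V₂ → V₂ ≤ V → V₁ + V₂ = V →
      isoProfile μ V < isoProfile μ V₁ + isoProfileAtInfty μ V₂ :=
  L1_compactness_implies_strict_subadditivity_general μ hcut hIfin hIcont V hV hcpt
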